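/- arXiv:2310.11908 — 2 statements merged into one kernel-verified Lean document; each statement's English description precedes it below -/
import Mathlib

section
/- The greedy mechanism M_AP is truthful against joint edge-and-capacity manipulation: if an agent with true capacity b_i and true edge set T_i reports any capacity b'_i ≤ b_i and any nonempty edge subset T'_i ⊆ T_i, its resulting utility is at most its utility when reporting (T_i, b_i). In particular, the set of tasks assigned to an agent reporting capacity b'_i < b_i is a subset of the tasks it receives reporting b_i (holding its edge report and the other agents fixed). -/
open Classical

/-- An edge of the bipartite graph: a pair (agent, task). -/
abbrev Edge (n m : ℕ) := Fin n × Fin m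

variable {n m : ℕ}

/-- Number of tasks assigned to agent `i` in the edge set `μ`. -/
def deg (μ : Finset (Edge n m)) (i : Fin n) : ℕ := (μ.filter (fun e => e.1 = i)).card

/-- `μ` is a b-matching over the edge set `E'`: it uses only edges of `E'`, each agent `i`
receives at most `b i` tasks, and each task is matched to at most one agent. -/
def IsBMatching (b : Fin n → ℕ) (E' μ : Finset (Edge n m)) : Prop :=
  μ ⊆ E' ∧ (∀ i, deg μ i ≤ b i) ∧ ∀ j : Fin m, (μ.filter (fun e => e.2 = j)).card ≤ 1

/-- Weight of a matching: total value of matched tasks. -/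
noncomputable def weight (q : Fin m → ℝ) (μ : Finset (Edge n m)) : ℝ := ∑ e ∈ μ, q e.2

/-- Utility of agent `i`: total value of the tasks matched to `i`. -/
noncomputable def util (q : Fin m → ℝ) (i : Fin n) (μ : Finset (Edge n m)) : ℝ :=
  ∑ e ∈ μ.filter (fun e => e.1 = i), q e.2

/-- `μ` is a maximum vertex-weighted b-matching over the edge set `E'`. -/
def IsMaxMatching (b : Fin n → ℕ) (q : Fin m → ℝ) (E' μ : Finset (Edge n m)) : Prop :=
  IsBMatching b E' μ ∧ ∀ ν, IsBMatching b E' ν → weight q ν ≤ weight q μ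

/-- The edges of `E` incident to agent `i`. -/
def agentEdges (E : Finset (Edge n m)) (i : Fin n) : Finset (Edge n m) :=
  E.filter (fun e => e.1 = i)

/-- The edge set obtained from `E` when agent `i` reports `S` instead of its true edges. -/
def deviate (E : Finset (Edge n m)) (i : Fin n) (S : Finset (Edge n m)) : Finset (Edge n m) :=
  E.filter (fun e => e.1 ≠ i) ∪ S

/-- A valid report of agent `i`: a nonempty subset of its true incident edges. -/
def ValidReport (E : Finset (Edge n m)) (i : Fin n) (S : Finset (Edge n m)) : Prop :=
  S ⊆ agentEdges E i ∧ S.Nonempty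
open Classical in
/-- The tasks sorted in non-increasing order of value (ties broken by index). -/
noncomputable def sortedTasks (m : ℕ) (q : Fin m → ℝ) : List (Fin m) :=
  List.insertionSort (fun j k => q k ≤ q j) (List.finRange m)

/-- The greedy mechanism `M_AP`: process tasks in non-increasing value order, assigning each
task to the highest-priority unsaturated agent connected to it, if any. -/
noncomputable def MAP (b : Fin n → ℕ) (q : Fin m → ℝ) (E' : Finset (Edge n m)) :
    Finset (Edge n m) :=
  (sortedTasks m q).foldl (fun μ j =>
    match (List.finRange n).find? (fun i => decide ((i, j) ∈ E' ∧ deg μ i < b i)) with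
    | some i => insert (i, j) μ
    | none => μ) ∅

/-- `p = [(i₁,j₁),…,(i_L,j_L)]` is an augmenting path from task `j = j₁` with respect to the
matching `μ` in the graph `E'`: the edges `(i_ℓ, j_ℓ)` are non-matching edges of `E'`, the
edges `(i_ℓ, j_{ℓ+1})` are matching edges, all interior agents are saturated and the final
agent is unsaturated. -/
structure IsAugPathFrom (b : Fin n → ℕ) (E' μ : Finset (Edge n m)) (j : Fin m)
    (p : List (Edge n m)) : Prop where
  ne : p ≠ []
  starts : ∀ e ∈ p.head?, e.2 = j
  mem : ∀ e ∈ p, e ∈ E' ∧ e ∉ μ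
  matched : ∀ k, (h : k + 1 < p.length) →
    ((p.get ⟨k, Nat.lt_of_succ_lt h⟩).1, (p.get ⟨k + 1, h⟩).2) ∈ μ
  satInterior : ∀ k, (h : k + 1 < p.length) →
    b (p.get ⟨k, Nat.lt_of_succ_lt h⟩).1 ≤ deg μ (p.get ⟨k, Nat.lt_of_succ_lt h⟩).1
  unsatLast : ∀ e ∈ p.getLast?, deg μ e.1 < b e.1
  agentsNodup : (p.map Prod.fst).Nodup
  tasksNodup : (p.map Prod.snd).Nodup

/-- The matching edges of an augmenting path. -/
def pathMatched (p : List (Edge n m)) : List (Edge n m) :=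
  (p.zip p.tail).map (fun ef => (ef.1.1, ef.2.2))

/-- Flip an augmenting path: remove its matching edges and add its non-matching edges. -/
def applyPath (μ : Finset (Edge n m)) (p : List (Edge n m)) : Finset (Edge n m) :=
  (μ \ (pathMatched p).toFinset) ∪ p.toFinset

/-- A numeric key realizing the lexicographic order (by vertex indices) on augmenting paths. -/
def pathKey (n m : ℕ) (p : List (Edge n m)) : ℕ :=
  ((p.flatMap fun (e : Edge n m) => [e.1.val + 1, e.2.val + 1]) ++
    List.replicate (2 * n - 2 * p.length) 0).foldl (fun a d => a * (n + m + 2) + d) 0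

/-- DFS explores agents in priority order and goes deep first: it returns the lexicographically
least augmenting path. -/
def dfsCost (n m : ℕ) (p : List (Edge n m)) : ℕ := pathKey n m p

/-- BFS returns a shortest augmenting path, exploring vertices in priority order: it returns
the lexicographically least augmenting path among those of minimum length. -/
def bfsCost (n m : ℕ) (p : List (Edge n m)) : ℕ :=
  p.length * (n + m + 2) ^ (2 * n + 2) + pathKey n m p

/-- Select the cost-minimal augmenting path from task `j`, if an augmenting path exists. -/
noncomputable def selectPath (cost : List (Edge n m) → ℕ) (b : Fin n → ℕ)
    (E' μ : Finset (Edge n m)) (j : Fin m) : Option (List (Edge n m)) :=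
  if h : ∃ p, IsAugPathFrom b E' μ j p ∧ ∀ p', IsAugPathFrom b E' μ j p' → cost p ≤ cost p'
  then some h.choose else none

/-- The augmenting-path algorithm: process tasks in non-increasing value order, at each step
flipping the augmenting path found by the (deterministic) search given by `cost`. -/
noncomputable def runAug (cost : List (Edge n m) → ℕ) (b : Fin n → ℕ) (q : Fin m → ℝ)
    (E' : Finset (Edge n m)) : Finset (Edge n m) :=
  (sortedTasks m q).foldl (fun μ j =>
    match selectPath cost b E' μ j with
    | some p => applyPath μ p
    | none => μ) ∅

/-- The maximum vertex-weighted b-matching mechanism using breadth-first search. -/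
noncomputable def MBFS (b : Fin n → ℕ) (q : Fin m → ℝ) (E' : Finset (Edge n m)) :
    Finset (Edge n m) := runAug (bfsCost n m) b q E'

/-- The maximum vertex-weighted b-matching mechanism using depth-first search. -/
noncomputable def MDFS (b : Fin n → ℕ) (q : Fin m → ℝ) (E' : Finset (Edge n m)) :
    Finset (Edge n m) := runAug (dfsCost n m) b q E'

/-!
Whether an agent of higher priority than `i` receives a task never depends on the reports of
`i` or of lower-priority agents. Hence `i` is offered the same sequence of tasks (those adjacent
to it and left over by higher-priority agents) whatever capacity it reports, and it receives the
first `b i` of them. Reporting a smaller capacity takes a prefix of what it got; reporting fewer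
edges shrinks the offered sequence to a sublist, and since tasks arrive in non-increasing value,
the first `b'` entries of a sublist are dominated termwise by the first `b i` entries of the
whole sequence.
-/

theorem List.sum_map_take_le_of_sublist {α β : Type*} [AddCommMonoid β] [PartialOrder β]
    [IsOrderedAddMonoid β] {q : α → β} :
    ∀ {L' L : List α}, L'.Sublist L → L.Pairwise (fun a c => q c ≤ q a) → (∀ a ∈ L, 0 ≤ q a) →
      ∀ {c' c : ℕ}, c' ≤ c → ((L'.take c').map q).sum ≤ ((L.take c).map q).sum
  | _, [], h, _, _, _, _, _ => by simp [List.sublist_nil.1 h]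
  | L', a :: L, h, hL, hq, c', c, hc => by
    have hq' : ∀ x ∈ L, 0 ≤ q x := fun x hx => hq x (List.mem_cons_of_mem a hx)
    have hrest : ∀ {c' c : ℕ}, c' ≤ c → ∀ {r : List α}, r.Sublist L →
        ((r.take c').map q).sum ≤ ((L.take c).map q).sum :=
      fun hc _ hr => sum_map_take_le_of_sublist hr hL.of_cons hq' hc
    have hnonneg : 0 ≤ (((a :: L).take c).map q).sum :=
      List.sum_nonneg fun x hx => by
        obtain ⟨y, hy, rfl⟩ := List.mem_map.1 hx
        exact hq y (List.mem_of_mem_take hy)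
    obtain _ | c' := c'
    · simpa using hnonneg
    obtain _ | c := c
    · omega
    rcases List.sublist_cons_iff.1 h with h | ⟨r, rfl, hr⟩
    · obtain _ | ⟨x, r⟩ := L'
      · simpa using hnonneg
      · simp only [List.take_succ_cons, List.map_cons, List.sum_cons]
        exact add_le_add ((List.pairwise_cons.1 hL).1 x (h.subset List.mem_cons_self))
          (hrest (by omega) (List.sublist_of_cons_sublist h))
    · simp only [List.take_succ_cons, List.map_cons, List.sum_cons]
      exact add_le_add le_rfl (hrest (by omega) hr)

namespace MAP

variable {b b' : Fin n → ℕ} {E E' μ ν : Finset (Edge n m)} {i k : Fin n} {j : Fin m}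
  {l : List (Fin m)}

theorem filter_fst_eq_toFinset {T : List (Fin m)} (h : ∀ j, (i, j) ∈ μ ↔ j ∈ T) :
    μ.filter (·.1 = i) = (T.map (Prod.mk i)).toFinset := by
  ext ⟨k, j⟩
  simp only [Finset.mem_filter, List.mem_toFinset, List.mem_map, Prod.mk.injEq]
  constructor
  · rintro ⟨he, rfl⟩; exact ⟨j, (h j).1 he, rfl, rfl⟩
  · rintro ⟨j, hj, rfl, rfl⟩; exact ⟨(h j).2 hj, rfl⟩

theorem deg_eq_length {T : List (Fin m)} (h : ∀ j, (i, j) ∈ μ ↔ j ∈ T) (hT : T.Nodup) :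
    deg μ i = T.length := by
  rw [deg, filter_fst_eq_toFinset h,
    List.toFinset_card_of_nodup (hT.map (Prod.mk_right_injective i)), List.length_map]

theorem util_eq_sum {q : Fin m → ℝ} {T : List (Fin m)} (h : ∀ j, (i, j) ∈ μ ↔ j ∈ T)
    (hT : T.Nodup) : util q i μ = (T.map q).sum := by
  rw [util, filter_fst_eq_toFinset h, List.sum_toFinset _ (hT.map (Prod.mk_right_injective i)),
    List.map_map]
  rfl

def assignee (b : Fin n → ℕ) (E : Finset (Edge n m)) (μ : Finset (Edge n m)) (j : Fin m) :
    Option (Fin n) :=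
  Fin.find? fun k => decide ((k, j) ∈ E ∧ deg μ k < b k)

def greedyStep (b : Fin n → ℕ) (E : Finset (Edge n m)) (μ : Finset (Edge n m)) (j : Fin m) :
    Finset (Edge n m) :=
  match assignee b E μ j with
  | some k => insert (k, j) μ
  | none => μ

def greedyRun (b : Fin n → ℕ) (E : Finset (Edge n m)) (l : List (Fin m)) : Finset (Edge n m) :=
  l.foldl (greedyStep b E) ∅

theorem eq_greedyRun (b : Fin n → ℕ) (q : Fin m → ℝ) (E : Finset (Edge n m)) :
    MAP b q E = greedyRun b E (sortedTasks m q) := by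
  unfold MAP greedyRun greedyStep assignee
  simp only [Fin.find?_eq_find?_finRange]

theorem greedyRun_nil : greedyRun b E [] = ∅ := rfl

theorem greedyRun_append_singleton :
    greedyRun b E (l ++ [j]) = greedyStep b E (greedyRun b E l) j := by
  simp [greedyRun]

theorem assignee_eq_some_iff : assignee b E μ j = some k ↔
    ((k, j) ∈ E ∧ deg μ k < b k) ∧ ∀ k' < k, ¬((k', j) ∈ E ∧ deg μ k' < b k') := by
  simp [assignee]

theorem exists_assignee_le (hE : (i, j) ∈ E) (hi : deg μ i < b i) :
    ∃ k ≤ i, assignee b E μ j = some k := by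
  obtain ⟨k, hk⟩ := Option.isSome_iff_exists.1 (Fin.isSome_find?_of_eq_true (p := fun k =>
    decide ((k, j) ∈ E ∧ deg μ k < b k)) (decide_eq_true ⟨hE, hi⟩))
  exact ⟨k, not_lt.1 fun hlt => (assignee_eq_some_iff.1 hk).2 i hlt ⟨hE, hi⟩, hk⟩

theorem mem_greedyStep {e : Edge n m} :
    e ∈ greedyStep b E μ j ↔ e ∈ μ ∨ assignee b E μ j = some e.1 ∧ e.2 = j := by
  unfold greedyStep
  cases assignee b E μ j <;> aesop

theorem snd_mem_of_mem_greedyRun {e : Edge n m} (he : e ∈ greedyRun b E l) : e.2 ∈ l := by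
  induction l using List.reverseRecOn with
  | nil => simp [greedyRun_nil] at he
  | append_singleton l j ih =>
    rw [greedyRun_append_singleton, mem_greedyStep] at he
    rcases he with he | ⟨-, he⟩
    · exact List.mem_append_left _ (ih he)
    · simp [he]

theorem deg_congr (h : ∀ j, (k, j) ∈ ν ↔ (k, j) ∈ μ) : deg ν k = deg μ k := by
  unfold deg
  congr 1
  ext ⟨k', j⟩
  simp only [Finset.mem_filter]
  constructor <;> rintro ⟨he, rfl⟩ <;> simp_all

theorem assignee_eq_some_iff_of_lt (hb : ∀ k < i, b' k = b k)
    (hE : ∀ k < i, ∀ j, (k, j) ∈ E' ↔ (k, j) ∈ E) (hμ : ∀ k < i, ∀ j, (k, j) ∈ ν ↔ (k, j) ∈ μ)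
    (hk : k < i) : assignee b' E' ν j = some k ↔ assignee b E μ j = some k := by
  have hP : ∀ k' ≤ k, ((k', j) ∈ E' ∧ deg ν k' < b' k') ↔ ((k', j) ∈ E ∧ deg μ k' < b k') :=
    fun k' hk' => by
      have hk'i := lt_of_le_of_lt hk' hk
      rw [hE k' hk'i, deg_congr (hμ k' hk'i), hb k' hk'i]
  simp only [assignee_eq_some_iff, hP k le_rfl]
  exact and_congr_right' (forall₂_congr fun k' hk' => not_congr (hP k' hk'.le))

theorem mem_greedyRun_iff_of_lt (hb : ∀ k < i, b' k = b k)
    (hE : ∀ k < i, ∀ j, (k, j) ∈ E' ↔ (k, j) ∈ E) (hk : k < i) :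
    (k, j) ∈ greedyRun b' E' l ↔ (k, j) ∈ greedyRun b E l := by
  induction l using List.reverseRecOn generalizing k j with
  | nil => simp [greedyRun_nil]
  | append_singleton l j' ih =>
    simp only [greedyRun_append_singleton, mem_greedyStep, ih hk,
      assignee_eq_some_iff_of_lt hb hE (fun k hk j => ih hk) hk]

-- Taken-ness is read off the final run: a task can only be assigned when it is processed.
def offeredTasks (b : Fin n → ℕ) (E : Finset (Edge n m)) (l : List (Fin m)) (i : Fin n) :
    List (Fin m) :=
  l.filter fun j => (i, j) ∈ E ∧ ∀ k < i, (k, j) ∉ greedyRun b E l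

theorem offeredTasks_sublist (hb : ∀ k < i, b' k = b k)
    (hE : ∀ k < i, ∀ j, (k, j) ∈ E' ↔ (k, j) ∈ E) (hEi : ∀ j, (i, j) ∈ E' → (i, j) ∈ E) :
    (offeredTasks b' E' l i).Sublist (offeredTasks b E l i) := by
  refine List.monotone_filter_right l fun j hj => ?_
  simp only [decide_eq_true_eq] at hj ⊢
  exact ⟨hEi j hj.1, fun k hk => (mem_greedyRun_iff_of_lt hb hE hk).not.1 (hj.2 k hk)⟩

theorem offeredTasks_append_singleton (hj : j ∉ l) :
    offeredTasks b E (l ++ [j]) i = offeredTasks b E l i ++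
      if (i, j) ∈ E ∧ ∀ k < i, (k, j) ∉ greedyRun b E (l ++ [j]) then [j] else [] := by
  unfold offeredTasks
  rw [List.filter_append]
  congr 1
  · refine List.filter_congr fun j' hj' => ?_
    have hj'j : j' ≠ j := by rintro rfl; exact hj hj'
    simp [greedyRun_append_singleton, mem_greedyStep, hj'j]
  · simp [List.filter_cons]

theorem nodup_take_offeredTasks (hl : l.Nodup) (c : ℕ) : ((offeredTasks b E l i).take c).Nodup :=
  (hl.filter _).sublist (List.take_sublist _ _)

theorem mem_greedyRun_iff_mem_take (hl : l.Nodup) :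
    (i, j) ∈ greedyRun b E l ↔ j ∈ (offeredTasks b E l i).take (b i) := by
  induction l using List.reverseRecOn generalizing j with
  | nil => simp [greedyRun_nil, offeredTasks]
  | append_singleton l j₀ ih =>
    obtain ⟨hj₀, hl⟩ : j₀ ∉ l ∧ l.Nodup := List.nodup_cons.1 (List.nodup_append_comm.1 hl)
    set L := offeredTasks b E l i
    have hdeg : deg (greedyRun b E l) i = min (b i) L.length := by
      rw [deg_eq_length (fun j => ih hl) (nodup_take_offeredTasks hl _), List.length_take]
    rw [offeredTasks_append_singleton hj₀, greedyRun_append_singleton, mem_greedyStep]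
    by_cases hA : assignee b E (greedyRun b E l) j₀ = some i
    · obtain ⟨⟨hEi, hlt⟩, -⟩ := assignee_eq_some_iff.1 hA
      have hfree : ∀ k < i, (k, j₀) ∉ greedyStep b E (greedyRun b E l) j₀ := by
        intro k hk hk'
        rcases mem_greedyStep.1 hk' with hk' | ⟨hk', -⟩
        · exact hj₀ (snd_mem_of_mem_greedyRun hk')
        · exact hk.ne (Option.some_injective _ (hk'.symm.trans hA))
      have hL : L.length < b i := by omega
      have hL' : (L ++ [j₀]).length ≤ b i := by
        rw [List.length_append, List.length_singleton]; omega
      rw [if_pos ⟨hEi, hfree⟩, List.take_of_length_le hL', ih hl, List.take_of_length_le hL.le]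
      simp [hA, L]
    · simp only [hA, false_and, or_false, ih hl]
      split_ifs with hfree
      · have hL : b i ≤ L.length := by
          by_contra! hL
          obtain ⟨k, hki, hk⟩ :=
            exists_assignee_le hfree.1 (show deg (greedyRun b E l) i < b i by omega)
          have hlt : k < i := lt_of_le_of_ne hki (by rintro rfl; exact hA hk)
          exact hfree.2 k hlt (mem_greedyStep.2 (Or.inr ⟨hk, rfl⟩))
        rw [List.take_append_of_le_length hL]
      · rw [List.append_nil]

theorem util_greedyRun_le {q : Fin m → ℝ} (hb : ∀ k < i, b' k = b k) (hbi : b' i ≤ b i)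
    (hE : ∀ k < i, ∀ j, (k, j) ∈ E' ↔ (k, j) ∈ E) (hEi : ∀ j, (i, j) ∈ E' → (i, j) ∈ E)
    (hl : l.Nodup) (hsorted : l.Pairwise fun j j' => q j' ≤ q j) (hq : ∀ j, 0 ≤ q j) :
    util q i (greedyRun b' E' l) ≤ util q i (greedyRun b E l) := by
  rw [util_eq_sum (fun _ => mem_greedyRun_iff_mem_take hl) (nodup_take_offeredTasks hl _),
    util_eq_sum (fun _ => mem_greedyRun_iff_mem_take hl) (nodup_take_offeredTasks hl _)]
  exact List.sum_map_take_le_of_sublist (offeredTasks_sublist hb hE hEi)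
    (hsorted.filter _) (fun j _ => hq j) hbi

theorem filter_greedyRun_subset (hb : ∀ k < i, b' k = b k) (hbi : b' i ≤ b i)
    (hl : l.Nodup) :
    (greedyRun b' E l).filter (·.1 = i) ⊆ (greedyRun b E l).filter (·.1 = i) := by
  have hoff : offeredTasks b' E l i = offeredTasks b E l i :=
    (offeredTasks_sublist hb (fun _ _ _ => Iff.rfl) fun _ => id).antisymm
      (offeredTasks_sublist (fun k hk => (hb k hk).symm) (fun _ _ _ => Iff.rfl) fun _ => id)
  rintro ⟨k, j⟩ he
  obtain ⟨hmem, hki : k = i⟩ := Finset.mem_filter.1 he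
  subst hki
  rw [mem_greedyRun_iff_mem_take hl, hoff] at hmem
  exact Finset.mem_filter.2
    ⟨(mem_greedyRun_iff_mem_take hl).2 (List.take_subset_take_left _ hbi hmem), rfl⟩

end MAP

theorem nodup_sortedTasks (q : Fin m → ℝ) : (sortedTasks m q).Nodup :=
  (List.perm_insertionSort _ _).nodup_iff.2 (List.nodup_finRange m)

theorem pairwise_sortedTasks (q : Fin m → ℝ) :
    (sortedTasks m q).Pairwise fun j j' => q j' ≤ q j := by
  have : Std.Total fun j j' : Fin m => q j' ≤ q j := ⟨fun j j' => le_total (q j') (q j)⟩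
  have : IsTrans (Fin m) fun j j' => q j' ≤ q j := ⟨fun _ _ _ h h' => h'.trans h⟩
  exact List.pairwise_insertionSort _ _

theorem mem_deviate_of_ne {E S : Finset (Edge n m)} {i k : Fin n} {j : Fin m}
    (hS : S ⊆ agentEdges E i) (hk : k ≠ i) : (k, j) ∈ deviate E i S ↔ (k, j) ∈ E := by
  have hkS : (k, j) ∉ S := fun h => hk (Finset.mem_filter.1 (hS h)).2
  simp [deviate, hk, hkS]

theorem mem_of_mem_deviate_self {E S : Finset (Edge n m)} {i : Fin n} {j : Fin m}
    (hS : S ⊆ agentEdges E i) (h : (i, j) ∈ deviate E i S) : (i, j) ∈ E := by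
  rcases Finset.mem_union.1 h with h | h
  · exact (Finset.mem_filter.1 h).1
  · exact (Finset.mem_filter.1 (hS h)).1

theorem MAP_truthful_edge_and_capacity_general (n m : ℕ) (b : Fin n → ℕ) (q : Fin m → ℝ)
    (hq : ∀ j, 0 < q j) (E : Finset (Edge n m)) (i : Fin n)
    (b' : ℕ) (hb' : b' ≤ b i)
    (S : Finset (Edge n m)) (hS : ValidReport E i S) :
    util q i (MAP (Function.update b i b') q (deviate E i S)) ≤ util q i (MAP b q E) ∧
    (MAP (Function.update b i b') q (deviate E i S)).filter (fun e => e.1 = i) ⊆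
      (MAP b q (deviate E i S)).filter (fun e => e.1 = i) := by
  have hb : ∀ k < i, Function.update b i b' k = b k := fun k hk => Function.update_of_ne hk.ne _ _
  have hbi : Function.update b i b' i ≤ b i := by rwa [Function.update_self]
  simp only [MAP.eq_greedyRun]
  exact ⟨MAP.util_greedyRun_le hb hbi (fun k hk _ => mem_deviate_of_ne hS.1 hk.ne)
      (fun _ => mem_of_mem_deviate_self hS.1) (nodup_sortedTasks q) (pairwise_sortedTasks q)
      (fun j => (hq j).le),
    MAP.filter_greedyRun_subset hb hbi (nodup_sortedTasks q)⟩

/-- The greedy mechanism `M_AP` is truthful against joint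
edge-and-capacity manipulation: if an agent with true capacity `b i` and true edges
`agentEdges E i` reports any capacity `b' ≤ b i` (with `b' ≥ 1`) and any nonempty edge
subset, its utility is at most the utility of reporting `(agentEdges E i, b i)`.
Moreover, holding the edge report and the other agents fixed, the set of tasks assigned to
the agent when it reports capacity `b'` is a subset of those it receives reporting `b i`. -/
theorem MAP_truthful_edge_and_capacity (n m : ℕ) (b : Fin n → ℕ) (q : Fin m → ℝ)
    (hq : ∀ j, 0 < q j) (E : Finset (Edge n m)) (i : Fin n)
    (b' : ℕ) (hb'1 : 1 ≤ b') (hb' : b' ≤ b i)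
    (S : Finset (Edge n m)) (hS : ValidReport E i S) :
    util q i (MAP (Function.update b i b') q (deviate E i S)) ≤ util q i (MAP b q E) ∧
    (MAP (Function.update b i b') q (deviate E i S)).filter (fun e => e.1 = i) ⊆
      (MAP b q (deviate E i S)).filter (fun e => e.1 = i) :=
  MAP_truthful_edge_and_capacity_general n m b q hq E i b' hb' S hS
end

section
/- When tasks are the strategic entities (each task may hide incident edges but cannot invent them), all three mechanisms M_BFS, M_DFS, and M_AP are truthful: a task that is left unmatched when reporting its full incident edge set remains unmatched under any nonempty subset report, holding other tasks' reports fixed. -/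
open Classical

variable {n m : ℕ}

/-- The edges of `E` incident to task `j`. -/
def taskEdges (E : Finset (Edge n m)) (j : Fin m) : Finset (Edge n m) :=
  E.filter (fun e => e.2 = j)

/-- The edge set obtained from `E` when task `j` reports `S` instead of its true edges. -/
def tdeviate (E : Finset (Edge n m)) (j : Fin m) (S : Finset (Edge n m)) :
    Finset (Edge n m) :=
  E.filter (fun e => e.2 ≠ j) ∪ S

/-- Task `j` is matched by `μ`. -/
def taskMatched (μ : Finset (Edge n m)) (j : Fin m) : Prop := ∃ e ∈ μ, e.2 = j

/-! Whichever of the three mechanisms is run, the step for a task `k` only looks at the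
edges of `k`, or, for an augmenting path, at edges of tasks that are `k` or already matched.
So as long as `j` is unmatched, the steps for `k ≠ j` are the same under the true graph and
under `j`'s report. At `j`'s own step, if nothing is found over `j`'s full edge set, nothing is
found over a subset of it either. Hence a task that ends unmatched under truth-telling does
not change the outcome at all by hiding edges: the two runs coincide. -/

theorem List.of_foldl {α β : Type*} (P : α → Prop) {f : α → β → α}
    (hP : ∀ a x, P (f a x) → P a) (L : List β) (a : α) (h : P (L.foldl f a)) : P a := by
  induction L generalizing a with
  | nil => exact h
  | cons x L ih => exact hP a x (ih (f a x) h)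

theorem List.foldl_eq_foldl_of_pred {α β : Type*} (P : α → Prop) {f g : α → β → α}
    (hP : ∀ a x, P (f a x) → P a) (hfg : ∀ a x, P (f a x) → g a x = f a x)
    (L : List β) (a : α) (h : P (L.foldl f a)) : L.foldl g a = L.foldl f a := by
  induction L generalizing a with
  | nil => rfl
  | cons x L ih =>
    have hx : P (f a x) := List.of_foldl P hP L (f a x) h
    simp only [List.foldl_cons, hfg a x hx, ih (f a x) h]

section TaskDeviation

variable {E S : Finset (Edge n m)} {j : Fin m}

theorem tdeviate_subset (hS : S ⊆ taskEdges E j) : tdeviate E j S ⊆ E := by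
  intro e he
  rcases Finset.mem_union.mp he with h | h
  · exact (Finset.mem_filter.mp h).1
  · exact (Finset.mem_filter.mp (hS h)).1

theorem mem_tdeviate_iff_of_snd_ne (hS : S ⊆ taskEdges E j) {e : Edge n m} (he : e.2 ≠ j) :
    e ∈ tdeviate E j S ↔ e ∈ E :=
  ⟨fun h => tdeviate_subset hS h, fun h => Finset.mem_union_left _ (Finset.mem_filter.mpr ⟨h, he⟩)⟩

end TaskDeviation

section AugmentingPaths

variable {b : Fin n → ℕ} {E E' μ : Finset (Edge n m)} {j k : Fin m} {p : List (Edge n m)}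

theorem IsAugPathFrom.mono (hp : IsAugPathFrom b E' μ k p) (hE : E' ⊆ E) :
    IsAugPathFrom b E μ k p :=
  { hp with mem := fun e he => ⟨hE (hp.mem e he).1, (hp.mem e he).2⟩ }

/-- Every task on the path is its start or is matched by `μ`. -/
theorem IsAugPathFrom.snd_ne (hp : IsAugPathFrom b E μ k p) (hkj : k ≠ j)
    (hj : ¬ taskMatched μ j) : ∀ e ∈ p, e.2 ≠ j := by
  intro e he hej
  obtain ⟨i, hi, rfl⟩ := List.getElem_of_mem he
  cases i with
  | zero => exact hkj ((hp.starts p[0] (by simp [List.head?_eq_getElem?, hi])).symm.trans hej)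
  | succ l => exact hj ⟨_, hp.matched l hi, by simpa using hej⟩

theorem isAugPathFrom_tdeviate_iff {S : Finset (Edge n m)} (hS : S ⊆ taskEdges E j)
    (hkj : k ≠ j) (hj : ¬ taskMatched μ j) :
    IsAugPathFrom b (tdeviate E j S) μ k p ↔ IsAugPathFrom b E μ k p :=
  ⟨fun hp => hp.mono (tdeviate_subset hS), fun hp =>
    { hp with
      mem := fun e he =>
        ⟨(mem_tdeviate_iff_of_snd_ne hS (hp.snd_ne hkj hj e he)).mpr (hp.mem e he).1,
          (hp.mem e he).2⟩ }⟩

theorem taskMatched_applyPath (h : taskMatched μ k) : taskMatched (applyPath μ p) k := by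
  obtain ⟨e, he, rfl⟩ := h
  by_cases hm : e ∈ (pathMatched p).toFinset
  · obtain ⟨⟨e₁, e₂⟩, hzip, rfl⟩ := List.mem_map.mp (List.mem_toFinset.mp hm)
    exact ⟨e₂, Finset.mem_union_right _
      (List.mem_toFinset.mpr (List.mem_of_mem_tail (List.of_mem_zip hzip).2)), rfl⟩
  · exact ⟨e, Finset.mem_union_left _ (Finset.mem_sdiff.mpr ⟨he, hm⟩), rfl⟩

theorem IsAugPathFrom.taskMatched_applyPath (hp : IsAugPathFrom b E μ k p) :
    taskMatched (applyPath μ p) k :=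
  ⟨p.head hp.ne, Finset.mem_union_right _ (List.mem_toFinset.mpr (List.head_mem hp.ne)),
    hp.starts _ (List.head?_eq_some_head hp.ne)⟩

end AugmentingPaths

section SelectPath

variable {cost : List (Edge n m) → ℕ} {b : Fin n → ℕ} {E μ : Finset (Edge n m)} {k : Fin m}
  {p : List (Edge n m)}

theorem isAugPathFrom_of_selectPath_eq_some (h : selectPath cost b E μ k = some p) :
    IsAugPathFrom b E μ k p := by
  unfold selectPath at h
  split at h
  · rename_i hex
    cases h
    exact hex.choose_spec.1
  · cases h

theorem selectPath_eq_none_iff :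
    selectPath cost b E μ k = none ↔ ¬ ∃ p, IsAugPathFrom b E μ k p := by
  unfold selectPath
  split
  · rename_i hex
    obtain ⟨p, hp, -⟩ := hex
    simpa using ⟨p, hp⟩
  · rename_i hmin
    refine iff_of_true rfl fun ⟨p₀, hp₀⟩ => hmin ?_
    obtain ⟨p, hp, hmin⟩ := WellFounded.has_min (InvImage.wf cost wellFounded_lt)
      {p | IsAugPathFrom b E μ k p} ⟨p₀, hp₀⟩
    exact ⟨p, hp, fun p' hp' => not_lt.mp (hmin p' hp')⟩

end SelectPath

/-- The step function of `runAug`. -/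
noncomputable def augStep (cost : List (Edge n m) → ℕ) (b : Fin n → ℕ)
    (E' μ : Finset (Edge n m)) (k : Fin m) : Finset (Edge n m) :=
  match selectPath cost b E' μ k with
  | some p => applyPath μ p
  | none => μ

/-- The step function of `MAP`. -/
noncomputable def apStep (b : Fin n → ℕ) (E' μ : Finset (Edge n m)) (k : Fin m) :
    Finset (Edge n m) :=
  match (List.finRange n).find? (fun i => decide ((i, k) ∈ E' ∧ deg μ i < b i)) with
  | some i => insert (i, k) μ
  | none => μ

section Steps

variable {cost : List (Edge n m) → ℕ} {b : Fin n → ℕ} {E S μ : Finset (Edge n m)}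
  {j k : Fin m}

theorem taskMatched_augStep (h : taskMatched μ j) : taskMatched (augStep cost b E μ k) j := by
  unfold augStep
  split
  · exact taskMatched_applyPath h
  · exact h

theorem augStep_tdeviate (hS : S ⊆ taskEdges E j)
    (h : ¬ taskMatched (augStep cost b E μ k) j) :
    augStep cost b (tdeviate E j S) μ k = augStep cost b E μ k := by
  have hμ : ¬ taskMatched μ j := mt taskMatched_augStep h
  suffices hpaths : IsAugPathFrom b (tdeviate E j S) μ k = IsAugPathFrom b E μ k by
    unfold augStep selectPath
    rw [hpaths]
  funext p
  by_cases hkj : k = j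
  · subst hkj
    have hnone : ∀ p, ¬ IsAugPathFrom b E μ k p := by
      intro p hp
      have hsel : selectPath cost b E μ k ≠ none :=
        mt selectPath_eq_none_iff.mp (not_not.mpr ⟨p, hp⟩)
      obtain ⟨p', hp'⟩ := Option.ne_none_iff_exists'.mp hsel
      apply h
      unfold augStep
      rw [hp']
      exact (isAugPathFrom_of_selectPath_eq_some hp').taskMatched_applyPath
    exact propext (iff_of_false (fun hp => hnone p (hp.mono (tdeviate_subset hS))) (hnone p))
  · exact propext (isAugPathFrom_tdeviate_iff hS hkj hμ)

theorem taskMatched_apStep (h : taskMatched μ j) : taskMatched (apStep b E μ k) j := by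
  unfold apStep
  split
  · obtain ⟨e, he, rfl⟩ := h
    exact ⟨e, Finset.mem_insert_of_mem he, rfl⟩
  · exact h

theorem apStep_tdeviate (hS : S ⊆ taskEdges E j) (h : ¬ taskMatched (apStep b E μ k) j) :
    apStep b (tdeviate E j S) μ k = apStep b E μ k := by
  suffices hagents : ∀ i, (i, k) ∈ tdeviate E j S ∧ deg μ i < b i ↔ (i, k) ∈ E ∧ deg μ i < b i by
    unfold apStep
    simp only [hagents]
  intro i
  by_cases hkj : k = j
  · subst hkj
    have hnone : ∀ i, ¬ ((i, k) ∈ E ∧ deg μ i < b i) := by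
      intro i hi
      obtain ⟨i', hi'⟩ : ∃ i', (List.finRange n).find?
          (fun i => decide ((i, k) ∈ E ∧ deg μ i < b i)) = some i' :=
        Option.ne_none_iff_exists'.mp (List.find?_eq_none.not.mpr
          (by simpa using ⟨i, hi⟩))
      apply h
      unfold apStep
      rw [hi']
      exact ⟨(i', k), Finset.mem_insert_self _ _, rfl⟩
    exact iff_of_false (fun hi => hnone i ⟨tdeviate_subset hS hi.1, hi.2⟩) (hnone i)
  · rw [mem_tdeviate_iff_of_snd_ne hS hkj]

end Steps

section Mechanisms

variable {b : Fin n → ℕ} {q : Fin m → ℝ} {E S : Finset (Edge n m)} {j : Fin m}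

theorem runAug_tdeviate {cost : List (Edge n m) → ℕ} (hS : S ⊆ taskEdges E j)
    (h : ¬ taskMatched (runAug cost b q E) j) :
    runAug cost b q (tdeviate E j S) = runAug cost b q E :=
  List.foldl_eq_foldl_of_pred (¬ taskMatched · j) (fun _ _ => mt taskMatched_augStep)
    (fun _ _ => augStep_tdeviate hS) _ ∅ h

theorem MAP_tdeviate (hS : S ⊆ taskEdges E j) (h : ¬ taskMatched (MAP b q E) j) :
    MAP b q (tdeviate E j S) = MAP b q E :=
  List.foldl_eq_foldl_of_pred (¬ taskMatched · j) (fun _ _ => mt taskMatched_apStep)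
    (fun _ _ => apStep_tdeviate hS) _ ∅ h

end Mechanisms

theorem task_manipulation_truthful_general (n m : ℕ) (b : Fin n → ℕ) (q : Fin m → ℝ)
    (E : Finset (Edge n m)) (j : Fin m) (S : Finset (Edge n m))
    (hSsub : S ⊆ taskEdges E j) :
    (¬ taskMatched (MBFS b q E) j → ¬ taskMatched (MBFS b q (tdeviate E j S)) j) ∧
    (¬ taskMatched (MDFS b q E) j → ¬ taskMatched (MDFS b q (tdeviate E j S)) j) ∧
    (¬ taskMatched (MAP b q E) j → ¬ taskMatched (MAP b q (tdeviate E j S)) j) :=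
  ⟨fun h => by rwa [MBFS, runAug_tdeviate hSsub h],
    fun h => by rwa [MDFS, runAug_tdeviate hSsub h],
    fun h => by rwa [MAP_tdeviate hSsub h]⟩

/-- When tasks are the strategic entities (each task may hide incident
edges but cannot invent them), the mechanisms `M_BFS`, `M_DFS`, and `M_AP` are all truthful:
a task left unmatched when reporting its full incident edge set remains unmatched under any
nonempty subset report, the other tasks' reports being fixed. -/
theorem task_manipulation_truthful (n m : ℕ) (b : Fin n → ℕ) (q : Fin m → ℝ)
    (hq : ∀ j, 0 < q j) (E : Finset (Edge n m)) (j : Fin m) (S : Finset (Edge n m))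
    (hSsub : S ⊆ taskEdges E j) (hSne : S.Nonempty) :
    (¬ taskMatched (MBFS b q E) j → ¬ taskMatched (MBFS b q (tdeviate E j S)) j) ∧
    (¬ taskMatched (MDFS b q E) j → ¬ taskMatched (MDFS b q (tdeviate E j S)) j) ∧
    (¬ taskMatched (MAP b q E) j → ¬ taskMatched (MAP b q (tdeviate E j S)) j) :=
  task_manipulation_truthful_general n m b q E j S hSsub
end
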